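/- Let ε : ℤ/4 × ℤ/2 → ℤ/2 be the homomorphism ε(x, y) = (x mod 2) + y, where x mod 2 denotes the image of x under the canonical reduction ℤ/4 → ℤ/2. Then the pullback subgroup {((x,y), n) ∈ (ℤ/4 × ℤ/2) × ℤ : ε(x,y) = n mod 2} is isomorphic as an abelian group to ℤ × ℤ/4. -/

import Mathlib

/-- The pullback `G ×_{ℤ/2} ℤ` of a homomorphism `w : G → ℤ/2` and the mod-2
reduction `ℤ → ℤ/2`, as a subgroup of `G × ℤ`. -/
def pullbackZmodTwo {G : Type*} [AddCommGroup G] (w : G →+ ZMod 2) :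
    AddSubgroup (G × ℤ) where
  carrier := {q : G × ℤ | w q.1 = (q.2 : ZMod 2)}
  zero_mem' := by simp
  add_mem' := by
    intro a b ha hb
    simp only [Set.mem_setOf_eq, Prod.fst_add, Prod.snd_add, map_add, Int.cast_add] at *
    rw [ha, hb]
  neg_mem' := by
    intro a ha
    simp only [Set.mem_setOf_eq, Prod.fst_neg, Prod.snd_neg, map_neg, Int.cast_neg] at *
    rw [ha]

theorem mem_pullbackZmodTwo {G : Type*} [AddCommGroup G] (w : G →+ ZMod 2) (q : G × ℤ) :
    q ∈ pullbackZmodTwo w ↔ w q.1 = (q.2 : ZMod 2) :=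
  Iff.rfl

/-- When `w (x, y) = f x + y`, the `ZMod 2`-coordinate of a point `((x, y), n)` of the pullback
is determined by `y = n - f x`, so forgetting it is an isomorphism onto `ℤ × H`. -/
def pullbackZmodTwoProdEquiv {H : Type*} [AddCommGroup H] (f : H →+ ZMod 2)
    (w : H × ZMod 2 →+ ZMod 2) (hw : ∀ x y, w (x, y) = f x + y) :
    pullbackZmodTwo w ≃+ ℤ × H where
  toFun q := (q.1.2, q.1.1.1)
  invFun p := ⟨((p.2, (p.1 : ZMod 2) - f p.2), p.1), by
    rw [mem_pullbackZmodTwo, hw]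
    ring⟩
  left_inv := by
    rintro ⟨⟨⟨x, y⟩, n⟩, hq⟩
    rw [mem_pullbackZmodTwo, hw] at hq
    ext <;> simp [← hq]
  right_inv _ := rfl
  map_add' _ _ := rfl

/-- Statement 8: For `ε : ℤ/4 × ℤ/2 → ℤ/2`, `ε(x,y) = (x mod 2) + y`, the pullback
`(ℤ/4 × ℤ/2) ×_{ℤ/2} ℤ` is isomorphic to `ℤ × ℤ/4`.  This computes `SKK^{G^+}_4`. -/
theorem pullback_gplus_four
    (ε : ZMod 4 × ZMod 2 →+ ZMod 2)
    (hε : ∀ (x : ZMod 4) (y : ZMod 2),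
      ε (x, y) = ZMod.castHom (by norm_num : (2 : ℕ) ∣ 4) (ZMod 2) x + y) :
    Nonempty (pullbackZmodTwo ε ≃+ ℤ × ZMod 4) :=
  ⟨pullbackZmodTwoProdEquiv (ZMod.castHom (by norm_num : (2 : ℕ) ∣ 4) (ZMod 2)).toAddMonoidHom
    ε hε⟩
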